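/- Let $\phi:X\to(-\infty,+\infty]$ be proper, $x\in X$, $\tau>0$, $\eta\ge0$, and suppose $x_{\tau,\eta}\in X$ satisfies $\frac1{2\tau}d(x,x_{\tau,\eta})^2+\phi(x_{\tau,\eta})\le\frac1{2\tau}d(x,y)^2+\phi(y)+\frac\eta2 d(x,x_{\tau,\eta})\,d(y,x_{\tau,\eta})$ for every $y\in X$. Then the global $(-1/\tau)$-slope satisfies $|\partial^{-1/\tau}\phi|(x_{\tau,\eta})\le (1+\tfrac12\eta\tau)\,\frac{d(x,x_{\tau,\eta})}{\tau}$; in particular the metric slope $|\partial\phi|(x_{\tau,\eta})$ is finite and bounded by the same quantity. -/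

import Mathlib

/-!
Testing the defining inequality of `x_{τ,η}` against `y` and expanding
`d(x, y)² ≤ (d(x, x_{τ,η}) + d(x_{τ,η}, y))²` gives, for every `y`,
`φ(x_{τ,η}) - φ(y) - d(x_{τ,η}, y)² / (2τ) ≤ (1 + ητ/2) (d(x, x_{τ,η}) / τ) d(x_{τ,η}, y)`,
which is exactly the bound on the global `(-1/τ)`-slope. The quadratic term is `o(d)` as
`y → x_{τ,η}`, so the same inequality bounds the metric slope.
-/

open Filter in
/-- The metric slope `|∂φ|(x)` of an extended-real functional. -/
noncomputable def metricSlope {X : Type*} [MetricSpace X] (φ : X → EReal) (x : X) : EReal :=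
  if φ x = ⊤ then ⊤ else
    max 0 (Filter.limsup (fun y => (max (φ x - φ y) 0) / ((dist x y : ℝ) : EReal))
      (nhdsWithin x {x}ᶜ))

/-- The global `λ`-slope `|∂^λ φ|(x)`. -/
noncomputable def globalSlope {X : Type*} [MetricSpace X] (φ : X → EReal) (lam : ℝ) (x : X) :
    EReal :=
  if φ x = ⊤ then ⊤ else
    max 0 (⨆ y ∈ {y : X | y ≠ x},
      (max (φ x - φ y + ((lam / 2 * dist x y ^ 2 : ℝ) : EReal)) 0) / ((dist x y : ℝ) : EReal))

section Slopes

variable {X : Type*} [MetricSpace X] {φ : X → EReal} {x : X} {lam S : ℝ}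

theorem globalSlope_le_of_forall (hx : φ x ≠ ⊤) (hS : 0 ≤ S)
    (h : ∀ y, φ x - φ y + ((lam / 2 * dist x y ^ 2 : ℝ) : EReal) ≤ ((S * dist x y : ℝ) : EReal)) :
    globalSlope φ lam x ≤ S := by
  rw [globalSlope, if_neg hx]
  refine max_le (EReal.coe_nonneg.2 hS) (iSup₂_le fun y hy => ?_)
  have hd : 0 < dist x y := dist_pos.2 (Ne.symm hy)
  rw [EReal.div_le_iff_le_mul (by exact_mod_cast hd) (EReal.coe_ne_top _), ← EReal.coe_mul,
    mul_comm (dist x y)]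
  exact max_le (h y) (EReal.coe_nonneg.2 (mul_nonneg hS hd.le))

theorem metricSlope_le_of_forall (hx : φ x ≠ ⊤) (hS : 0 ≤ S)
    (h : ∀ y, φ x - φ y + ((lam / 2 * dist x y ^ 2 : ℝ) : EReal) ≤ ((S * dist x y : ℝ) : EReal)) :
    metricSlope φ x ≤ S := by
  rw [metricSlope, if_neg hx]
  refine max_le (EReal.coe_nonneg.2 hS) (EReal.le_of_forall_lt_iff_le.1 fun z hz => ?_)
  have hzS : S < z := by exact_mod_cast hz
  -- on this ball the quadratic term `|lam| / 2 * d²` is at most `(z - S) * d`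
  have hr : 0 < (z - S) / (|lam| + 1) := div_pos (sub_pos.2 hzS) (by positivity)
  refine Filter.limsup_le_of_le (by isBoundedDefault) ?_
  filter_upwards [self_mem_nhdsWithin,
    mem_nhdsWithin_of_mem_nhds (Metric.ball_mem_nhds x hr)] with y hyx hy
  have hd : 0 < dist x y := dist_pos.2 (Ne.symm hyx)
  have hdr : dist x y * (|lam| + 1) < z - S := by
    rw [Metric.mem_ball, dist_comm, lt_div_iff₀ (by positivity)] at hy
    exact hy
  have hquad : S * dist x y - lam / 2 * dist x y ^ 2 ≤ dist x y * z := by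
    nlinarith [neg_abs_le lam, abs_nonneg lam]
  rw [EReal.div_le_iff_le_mul (by exact_mod_cast hd) (EReal.coe_ne_top _), ← EReal.coe_mul]
  refine max_le ?_ (EReal.coe_nonneg.2 (mul_nonneg hd.le (hS.trans hzS.le)))
  calc φ x - φ y ≤ ((S * dist x y - lam / 2 * dist x y ^ 2 : ℝ) : EReal) := by
        rw [EReal.coe_sub, EReal.le_sub_iff_add_le (.inl (EReal.coe_ne_bot _))
          (.inl (EReal.coe_ne_top _))]
        exact h y
    _ ≤ _ := EReal.coe_le_coe_iff.2 hquad

end Slopes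

theorem sub_le_of_perturbed_resolvent_ineq {X : Type*} [PseudoMetricSpace X] {x z y : X}
    {τ η p q : ℝ} (hτ : 0 < τ)
    (h : 1 / (2 * τ) * dist x z ^ 2 + p ≤
      1 / (2 * τ) * dist x y ^ 2 + q + η / 2 * dist x z * dist y z) :
    p - q + -1 / τ / 2 * dist z y ^ 2 ≤ (1 + η * τ / 2) * (dist x z / τ) * dist z y := by
  set a := dist x z
  set d := dist z y
  have htri : dist x y ^ 2 - a ^ 2 ≤ 2 * a * d + d ^ 2 := by
    nlinarith [dist_triangle x z y, dist_nonneg (x := x) (y := y)]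
  have hgrowth : (dist x y ^ 2 - a ^ 2) / (2 * τ) ≤ (2 * a * d + d ^ 2) / (2 * τ) :=
    div_le_div_of_nonneg_right htri (by positivity)
  have hsplit : (2 * a * d + d ^ 2) / (2 * τ) + η / 2 * a * d =
      (1 + η * τ / 2) * (a / τ) * d - -1 / τ / 2 * d ^ 2 := by
    field_simp
    ring
  rw [dist_comm y z] at h
  have hdiff : 1 / (2 * τ) * dist x y ^ 2 - 1 / (2 * τ) * a ^ 2 =
      (dist x y ^ 2 - a ^ 2) / (2 * τ) := by ring
  linarith

section PerturbedResolvent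

variable {X : Type*} [MetricSpace X]

def IsPerturbedResolvent (φ : X → EReal) (τ η : ℝ) (x z : X) : Prop :=
  ∀ y : X, ((1 / (2 * τ) * dist x z ^ 2 : ℝ) : EReal) + φ z ≤
    ((1 / (2 * τ) * dist x y ^ 2 : ℝ) : EReal) + φ y + ((η / 2 * dist x z * dist y z : ℝ) : EReal)

variable {φ : X → EReal} {τ η : ℝ} {x z : X}

theorem IsPerturbedResolvent.ne_top (hres : IsPerturbedResolvent φ τ η x z)
    (hproper : ∃ y, φ y ≠ ⊤) : φ z ≠ ⊤ := by
  obtain ⟨y, hy⟩ := hproper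
  intro hz
  have h := hres y
  rw [hz, EReal.coe_add_top, top_le_iff] at h
  exact (EReal.add_lt_top (EReal.add_lt_top (EReal.coe_ne_top _) hy).ne
    (EReal.coe_ne_top _)).ne h

theorem IsPerturbedResolvent.sub_le (hres : IsPerturbedResolvent φ τ η x z)
    (hbot : ∀ y, φ y ≠ ⊥) (hz : φ z ≠ ⊤) (hτ : 0 < τ) (y : X) :
    φ z - φ y + ((-1 / τ / 2 * dist z y ^ 2 : ℝ) : EReal) ≤
      (((1 + η * τ / 2) * (dist x z / τ) * dist z y : ℝ) : EReal) := by
  by_cases hy : φ y = ⊤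
  · rw [hy, EReal.sub_top, EReal.bot_add]
    exact bot_le
  have h := hres y
  rw [← EReal.coe_toReal hz (hbot z), ← EReal.coe_toReal hy (hbot y)] at h ⊢
  norm_cast at h
  exact_mod_cast sub_le_of_perturbed_resolvent_ineq hτ h

end PerturbedResolvent

theorem stmt4 {X : Type*} [MetricSpace X] (φ : X → EReal)
    (hbot : ∀ y, φ y ≠ ⊥) (hproper : ∃ y, φ y ≠ ⊤)
    (x xτη : X) (τ η : ℝ) (hτ : 0 < τ) (hη : 0 ≤ η)
    (hres : ∀ y : X,
      ((1 / (2 * τ) * dist x xτη ^ 2 : ℝ) : EReal) + φ xτη ≤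
        ((1 / (2 * τ) * dist x y ^ 2 : ℝ) : EReal) + φ y +
          ((η / 2 * dist x xτη * dist y xτη : ℝ) : EReal)) :
    globalSlope φ (-1 / τ) xτη ≤ (((1 + η * τ / 2) * (dist x xτη / τ) : ℝ) : EReal) ∧
    metricSlope φ xτη ≤ (((1 + η * τ / 2) * (dist x xτη / τ) : ℝ) : EReal) := by
  have hfin : φ xτη ≠ ⊤ := IsPerturbedResolvent.ne_top hres hproper
  have hbound := IsPerturbedResolvent.sub_le hres hbot hfin hτ
  have hS : 0 ≤ (1 + η * τ / 2) * (dist x xτη / τ) := by positivity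
  exact ⟨globalSlope_le_of_forall hfin hS hbound, metricSlope_le_of_forall hfin hS hbound⟩
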